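/- Let g : ℝ → ℝ be twice continuously differentiable with g, g', g'' ∈ L²(ℝ) and with g(x) and g'(x) tending to 0 as |x| → ∞. Then ∫_ℝ |g'(x)| · |g''(x)|² dx ≤ √2 · ‖g'‖_{L²}^{1/2} · ‖g''‖_{L²}^{5/2} ≤ √2 · ‖g‖_{L²}^{1/4} · ‖g''‖_{L²}^{11/4}. -/

import Mathlib

open MeasureTheory Filter Set intervalIntegral

/-- The `L²(ℝ)` norm `(∫ℝ |g(x)|² dx)^(1/2)`. -/
noncomputable def L2Norm (g : ℝ → ℝ) : ℝ := (∫ x : ℝ, (g x) ^ 2) ^ ((1 : ℝ) / 2)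

/-- `g ∈ L²(ℝ)`, i.e. `∫ℝ |g(x)|² dx < ∞`. -/
def MemL2 (g : ℝ → ℝ) : Prop := MeasureTheory.Integrable fun x => (g x) ^ 2

/-!
Writing `‖·‖` for `L2Norm`: since `g' → 0` at `-∞`, `g'(x)² = 2 ∫_{-∞}^x g' g''`, so Cauchy–Schwarz
gives `sup |g'| ≤ √(2 ‖g'‖ ‖g''‖)`; pulling this supremum out of `∫ |g'| |g''|²` yields the first
inequality. Integration by parts, with the boundary term `g g'` vanishing at `±∞`, gives
`‖g'‖² = -∫ g g'' ≤ ‖g‖ ‖g''‖`, which turns `‖g'‖^{1/2}` into `‖g‖^{1/4} ‖g''‖^{1/4}`.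
-/

open Real

theorem integral_abs_mul_le_sqrt_mul_sqrt {α : Type*} [MeasurableSpace α] {μ : Measure α}
    {f h : α → ℝ} (hf : MemLp f 2 μ) (hh : MemLp h 2 μ) :
    ∫ x, |f x * h x| ∂μ ≤ √(∫ x, f x ^ 2 ∂μ) * √(∫ x, h x ^ 2 ∂μ) := by
  have := integral_mul_norm_le_Lp_mul_Lq HolderConjugate.two_two (by simpa using hf)
    (by simpa using hh)
  simpa [abs_mul, sqrt_eq_rpow] using this

theorem sq_le_two_mul_integral_abs_mul_deriv {f f' : ℝ → ℝ} (hf : ∀ x, HasDerivAt f (f' x) x)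
    (hff' : Integrable fun x => f x * f' x) (hlim : Tendsto f atBot (nhds 0)) (x : ℝ) :
    f x ^ 2 ≤ 2 * ∫ t, |f t * f' t| := by
  have hint : Integrable fun t => 2 * (f t * f' t) := hff'.const_mul 2
  have hsq : ∫ t in Iic x, 2 * (f t * f' t) = f x ^ 2 := by
    have := integral_Iic_of_hasDerivAt_of_tendsto' (f := fun t => f t ^ 2) (a := x) (m := 0)
      (fun t _ => by simpa [mul_assoc] using (hf t).fun_pow 2) hint.integrableOn
      (by simpa using hlim.pow 2)
    simpa using this
  calc f x ^ 2 = ∫ t in Iic x, 2 * (f t * f' t) := hsq.symm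
    _ ≤ ∫ t in Iic x, |2 * (f t * f' t)| :=
        setIntegral_mono hint.integrableOn hint.abs.integrableOn fun t => le_abs_self _
    _ ≤ ∫ t, |2 * (f t * f' t)| :=
        setIntegral_le_integral hint.abs (.of_forall fun t => abs_nonneg _)
    _ = 2 * ∫ t, |f t * f' t| := by simp only [abs_mul, abs_two, MeasureTheory.integral_const_mul]

theorem integral_deriv_sq_eq_neg_integral_mul {g g' g'' : ℝ → ℝ}
    (hg : ∀ x, HasDerivAt g (g' x) x) (hg' : ∀ x, HasDerivAt g' (g'' x) x)
    (hgg'' : Integrable fun x => g x * g'' x) (hg'2 : Integrable fun x => g' x ^ 2)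
    (hlim : Tendsto (fun x => g x * g' x) (cocompact ℝ) (nhds 0)) :
    ∫ x, g' x ^ 2 = -∫ x, g x * g'' x := by
  have := integral_mul_deriv_eq_deriv_mul (u := g) (v := g') (fun x _ => hg x)
    (fun x _ => hg' x) hgg''
    (by simpa only [sq] using hg'2 : Integrable fun x => g' x * g' x)
    (hlim.mono_left atBot_le_cocompact) (hlim.mono_left atTop_le_cocompact)
  simp only [sq, this, sub_zero, zero_sub, neg_neg]

theorem L2Norm_eq_sqrt (g : ℝ → ℝ) : L2Norm g = √(∫ x, g x ^ 2) := (sqrt_eq_rpow _).symm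

theorem L2Norm_nonneg (g : ℝ → ℝ) : 0 ≤ L2Norm g := by
  rw [L2Norm_eq_sqrt]; exact sqrt_nonneg _

theorem L2Norm_sq (g : ℝ → ℝ) : L2Norm g ^ 2 = ∫ x, g x ^ 2 := by
  rw [L2Norm_eq_sqrt, sq_sqrt (integral_nonneg fun x => sq_nonneg _)]

theorem MemL2.memLp {g : ℝ → ℝ} (hg : MemL2 g) (hc : Continuous g) : MemLp g 2 :=
  (memLp_two_iff_integrable_sq hc.aestronglyMeasurable).2 hg

theorem integral_abs_mul_le_L2Norm_mul {f h : ℝ → ℝ} (hf : MemL2 f) (hh : MemL2 h)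
    (hfc : Continuous f) (hhc : Continuous h) :
    ∫ x, |f x * h x| ≤ L2Norm f * L2Norm h := by
  simpa only [L2Norm_eq_sqrt] using
    integral_abs_mul_le_sqrt_mul_sqrt (hf.memLp hfc) (hh.memLp hhc)

theorem sq_le_two_mul_L2Norm_mul_L2Norm_deriv {f : ℝ → ℝ} (hf : ContDiff ℝ 1 f) (hf2 : MemL2 f)
    (hf'2 : MemL2 (deriv f)) (hlim : Tendsto f atBot (nhds 0)) (x : ℝ) :
    f x ^ 2 ≤ 2 * (L2Norm f * L2Norm (deriv f)) := by
  obtain ⟨hdf, hcf'⟩ := contDiff_one_iff_deriv.mp hf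
  have hprod := (hf2.memLp hf.continuous).integrable_mul (hf'2.memLp hcf')
  calc f x ^ 2 ≤ 2 * ∫ t, |f t * deriv f t| :=
        sq_le_two_mul_integral_abs_mul_deriv (fun t => (hdf t).hasDerivAt) hprod hlim x
    _ ≤ 2 * (L2Norm f * L2Norm (deriv f)) := by
        gcongr; exact integral_abs_mul_le_L2Norm_mul hf2 hf'2 hf.continuous hcf'

theorem L2Norm_deriv_sq_le {g : ℝ → ℝ} (hg : ContDiff ℝ 2 g) (hg2 : MemL2 g)
    (hg'2 : MemL2 (deriv g)) (hg''2 : MemL2 (deriv (deriv g)))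
    (hlim : Tendsto (fun x => g x * deriv g x) (cocompact ℝ) (nhds 0)) :
    L2Norm (deriv g) ^ 2 ≤ L2Norm g * L2Norm (deriv (deriv g)) := by
  obtain ⟨hdg', hcg''⟩ := contDiff_one_iff_deriv.mp (hg.deriv' : ContDiff ℝ 1 (deriv g))
  have hgg'' := (hg2.memLp hg.continuous).integrable_mul (hg''2.memLp hcg'')
  calc L2Norm (deriv g) ^ 2 = -∫ x, g x * deriv (deriv g) x := by
        rw [L2Norm_sq]
        exact integral_deriv_sq_eq_neg_integral_mul
          (fun x => (hg.differentiable (by norm_num) x).hasDerivAt) (fun x => (hdg' x).hasDerivAt)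
          hgg'' hg'2 hlim
    _ ≤ |∫ x, g x * deriv (deriv g) x| := neg_le_abs _
    _ ≤ ∫ x, |g x * deriv (deriv g) x| := by
        simpa only [Real.norm_eq_abs] using
          norm_integral_le_integral_norm (μ := volume) fun x => g x * deriv (deriv g) x
    _ ≤ L2Norm g * L2Norm (deriv (deriv g)) :=
        integral_abs_mul_le_L2Norm_mul hg2 hg''2 hg.continuous hcg''

theorem sqrt_two_mul_mul_mul_sq {b c : ℝ} (hb : 0 ≤ b) (hc : 0 ≤ c) :
    √(2 * b * c) * c ^ 2 = √2 * b ^ ((1 : ℝ) / 2) * c ^ ((5 : ℝ) / 2) := by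
  rw [sqrt_mul' _ hc, sqrt_mul' _ hb, sqrt_eq_rpow b, sqrt_eq_rpow c, mul_assoc, ← rpow_natCast,
    ← rpow_add' hc (by norm_num)]
  norm_num

theorem rpow_half_mul_rpow_le_of_sq_le_mul {a b c : ℝ} (ha : 0 ≤ a) (hb : 0 ≤ b) (hc : 0 ≤ c)
    (h : b ^ 2 ≤ a * c) :
    b ^ ((1 : ℝ) / 2) * c ^ ((5 : ℝ) / 2) ≤ a ^ ((1 : ℝ) / 4) * c ^ ((11 : ℝ) / 4) := by
  have hb' : b ^ ((1 : ℝ) / 2) ≤ a ^ ((1 : ℝ) / 4) * c ^ ((1 : ℝ) / 4) :=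
    calc b ^ ((1 : ℝ) / 2) = (b ^ 2) ^ ((1 : ℝ) / 4) := by
          rw [← rpow_natCast, ← rpow_mul hb]; norm_num
      _ ≤ (a * c) ^ ((1 : ℝ) / 4) := by gcongr
      _ = a ^ ((1 : ℝ) / 4) * c ^ ((1 : ℝ) / 4) := mul_rpow ha hc
  calc b ^ ((1 : ℝ) / 2) * c ^ ((5 : ℝ) / 2)
      ≤ a ^ ((1 : ℝ) / 4) * c ^ ((1 : ℝ) / 4) * c ^ ((5 : ℝ) / 2) := by gcongr
    _ = a ^ ((1 : ℝ) / 4) * c ^ ((11 : ℝ) / 4) := by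
        rw [mul_assoc, ← rpow_add' hc (by norm_num)]; norm_num

/-- estimate (3.13). If `g ∈ C²` with `g, g', g'' ∈ L²(ℝ)` and
`g, g' → 0` as `|x| → ∞`, then
`∫ |g'| |g''|² dx ≤ √2 ‖g'‖^{1/2} ‖g''‖^{5/2} ≤ √2 ‖g‖^{1/4} ‖g''‖^{11/4}`. -/
theorem quadratic_term_estimate
    (g : ℝ → ℝ) (hg : ContDiff ℝ 2 g)
    (hL2 : MemL2 g) (hL2' : MemL2 (deriv g)) (hL2'' : MemL2 (iteratedDeriv 2 g))
    (hdecay : Tendsto g (cocompact ℝ) (nhds 0))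
    (hdecay' : Tendsto (deriv g) (cocompact ℝ) (nhds 0)) :
    (∫ x : ℝ, |deriv g x| * |iteratedDeriv 2 g x| ^ 2)
        ≤ Real.sqrt 2 * L2Norm (deriv g) ^ ((1:ℝ)/2) * L2Norm (iteratedDeriv 2 g) ^ ((5:ℝ)/2)
      ∧ Real.sqrt 2 * L2Norm (deriv g) ^ ((1:ℝ)/2) * L2Norm (iteratedDeriv 2 g) ^ ((5:ℝ)/2)
        ≤ Real.sqrt 2 * L2Norm g ^ ((1:ℝ)/4) * L2Norm (iteratedDeriv 2 g) ^ ((11:ℝ)/4) := by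
  rw [iteratedDeriv_succ, iteratedDeriv_one] at hL2'' ⊢
  set a := L2Norm g
  set b := L2Norm (deriv g)
  set c := L2Norm (deriv (deriv g))
  have hsup (x : ℝ) : |deriv g x| ≤ √(2 * b * c) := by
    rw [mul_assoc]
    exact abs_le_sqrt <| sq_le_two_mul_L2Norm_mul_L2Norm_deriv hg.deriv' hL2' hL2''
      (hdecay'.mono_left atBot_le_cocompact) x
  have hcross : b ^ 2 ≤ a * c :=
    L2Norm_deriv_sq_le hg hL2 hL2' hL2'' (by simpa using hdecay.mul hdecay')
  constructor
  · calc ∫ x, |deriv g x| * |deriv (deriv g) x| ^ 2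
          ≤ ∫ x, √(2 * b * c) * deriv (deriv g) x ^ 2 :=
          integral_mono_of_nonneg (.of_forall fun x => by positivity) (hL2''.const_mul _)
            (.of_forall fun x => by dsimp only; rw [sq_abs]; gcongr; exact hsup x)
      _ = √(2 * b * c) * c ^ 2 := by rw [MeasureTheory.integral_const_mul, L2Norm_sq]
      _ = √2 * b ^ ((1 : ℝ) / 2) * c ^ ((5 : ℝ) / 2) :=
          sqrt_two_mul_mul_mul_sq (L2Norm_nonneg _) (L2Norm_nonneg _)
  · simpa only [mul_assoc] using mul_le_mul_of_nonneg_left (rpow_half_mul_rpow_le_of_sq_le_mul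
      (L2Norm_nonneg _) (L2Norm_nonneg _) (L2Norm_nonneg _) hcross) (sqrt_nonneg 2)
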